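/- arXiv:2103.10235 — 5 statements merged into one kernel-verified Lean document; each statement's English description precedes it below -/
import Mathlib

section
/- Let T_i : [0,1] → [0,1], i ∈ I, be orientation-preserving affine similarities T_i(x) = α_i x + c_i with α_i > 0, Σ α_i = 1, such that the half-open intervals T_i[0,1) are pairwise disjoint. Suppose no T_i satisfies T_i(0) = 0. Then for every λ ∈ (0,1] the map v ↦ T_v(0) is a bijection from A_λ = {v : α_v ≥ λ} onto X_λ = {T_v(0) : v ∈ W(I), α_v ≥ λ}; in particular |X_λ| = |A_λ|. -/
/-- The weight of a finite word: the product of the weights of its letters. -/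
noncomputable def wordWeight {I : Type*} (α : I → ℝ) (v : List I) : ℝ :=
  (v.map α).prod

/-- The composition `T_v = T_{i₁} ∘ ⋯ ∘ T_{i_k}` of the affine similarities
`T_i(x) = α_i x + c_i` along the word `v = (i₁,…,i_k)`, applied to `x`. -/
noncomputable def wordMap {I : Type*} (α c : I → ℝ) (v : List I) (x : ℝ) : ℝ :=
  v.foldr (fun i y => α i * y + c i) x

lemma wordMap_mem_Ico {I : Type*} (α c : I → ℝ)
    (hpos : ∀ i, 0 < α i) (hc0 : ∀ i, 0 ≤ c i) (hc1 : ∀ i, α i + c i ≤ 1) :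
    ∀ v : List I, wordMap α c v 0 ∈ Set.Ico (0 : ℝ) 1 := by
  intro v
  induction v with
  | nil => simp [wordMap]
  | cons i v ih =>
    have h : wordMap α c (i :: v) 0 = α i * wordMap α c v 0 + c i := rfl
    obtain ⟨h0, h1⟩ := ih
    constructor
    · rw [h]; nlinarith [hpos i, hc0 i]
    · rw [h]
      have : α i * wordMap α c v 0 < α i * 1 := by
        exact mul_lt_mul_of_pos_left h1 (hpos i)
      nlinarith [hc1 i, hc0 i]

lemma wordMap_injective {I : Type*} (α c : I → ℝ)
    (hpos : ∀ i, 0 < α i) (hc0 : ∀ i, 0 ≤ c i) (hc1 : ∀ i, α i + c i ≤ 1)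
    (hdisj : Pairwise fun i j =>
      Disjoint (Set.Ico (c i) (c i + α i)) (Set.Ico (c j) (c j + α j)))
    (hfix : ∀ i, c i ≠ 0) :
    Function.Injective (fun v : List I => wordMap α c v 0) := by
  have hmem : ∀ (i : I) (v : List I),
      wordMap α c (i :: v) 0 ∈ Set.Ico (c i) (c i + α i) := by
    intro i v
    obtain ⟨h0, h1⟩ := wordMap_mem_Ico α c hpos hc0 hc1 v
    have h : wordMap α c (i :: v) 0 = α i * wordMap α c v 0 + c i := rfl
    constructor
    · rw [h]; nlinarith [(hpos i).le]
    · rw [h]; nlinarith [hpos i]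
  have hcpos : ∀ i, 0 < c i := fun i => lt_of_le_of_ne (hc0 i) (Ne.symm (hfix i))
  intro v
  induction v with
  | nil =>
    intro w hw
    cases w with
    | nil => rfl
    | cons j w =>
      exfalso
      simp only at hw
      have h : wordMap α c (j :: w) 0 = α j * wordMap α c w 0 + c j := rfl
      have h0 := (wordMap_mem_Ico α c hpos hc0 hc1 w).1
      have : (0 : ℝ) = α j * wordMap α c w 0 + c j := by rw [← h, ← hw]; rfl
      nlinarith [hpos j, hcpos j]
  | cons i v ih =>
    intro w hw
    cases w with
    | nil =>
      exfalso
      simp only at hw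
      have h0 := (wordMap_mem_Ico α c hpos hc0 hc1 v).1
      have : α i * wordMap α c v 0 + c i = (0 : ℝ) := hw
      nlinarith [hpos i, hcpos i]
    | cons j w =>
      simp only at hw
      have hij : i = j := by
        by_contra hne
        exact Set.not_disjoint_iff.2
          ⟨wordMap α c (i :: v) 0, hmem i v, hw ▸ hmem j w⟩ (hdisj hne)
      subst hij
      have hvw : wordMap α c v 0 = wordMap α c w 0 := by
        have h1 : α i * wordMap α c v 0 + c i = α i * wordMap α c w 0 + c i := hw
        have h2 : α i * wordMap α c v 0 = α i * wordMap α c w 0 :=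
          add_right_cancel h1
        exact mul_left_cancel₀ (hpos i).ne' h2
      rw [ih hvw]

/-- If no similarity `T_i` fixes `0`, then for every `λ ∈ (0,1]` the map
`v ↦ T_v(0)` is a bijection from `A_λ = {v : α_v ≥ λ}` onto
`X_λ = {T_v(0) : α_v ≥ λ}`; in particular `|X_λ| = |A_λ|`. -/
theorem bijection_words_to_endpoints {I : Type*} [Countable I] (α c : I → ℝ)
    (hpos : ∀ i, 0 < α i) (hsum : HasSum α 1)
    (hc0 : ∀ i, 0 ≤ c i) (hc1 : ∀ i, α i + c i ≤ 1)
    (hdisj : Pairwise fun i j =>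
      Disjoint (Set.Ico (c i) (c i + α i)) (Set.Ico (c j) (c j + α j)))
    (hfix : ∀ i, c i ≠ 0)
    (lam : ℝ) (hlam0 : 0 < lam) (hlam1 : lam ≤ 1) :
    Set.BijOn (fun v => wordMap α c v 0)
        {v : List I | lam ≤ wordWeight α v}
        {x : ℝ | ∃ v : List I, lam ≤ wordWeight α v ∧ wordMap α c v 0 = x} ∧
      Nat.card {x : ℝ | ∃ v : List I, lam ≤ wordWeight α v ∧ wordMap α c v 0 = x} =
        Nat.card {v : List I | lam ≤ wordWeight α v} := by
  have hinj := wordMap_injective α c hpos hc0 hc1 hdisj hfix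
  have himg : {x : ℝ | ∃ v : List I, lam ≤ wordWeight α v ∧ wordMap α c v 0 = x} =
      (fun v : List I => wordMap α c v 0) '' {v | lam ≤ wordWeight α v} := by
    ext x
    simp [Set.mem_image]
  have hbij : Set.BijOn (fun v => wordMap α c v 0)
      {v : List I | lam ≤ wordWeight α v}
      {x : ℝ | ∃ v : List I, lam ≤ wordWeight α v ∧ wordMap α c v 0 = x} := by
    rw [himg]
    exact (hinj.injOn).bijOn_image
  refine ⟨hbij, ?_⟩
  rw [himg, Nat.card_image_of_injective hinj]
end

section
/- With the setup of affine similarities as above, for all v ∈ W(I) and λ ∈ (0,1], the number of points of X_{λ α_v} lying in the interval T_v[0,1) equals |X_λ|: that is, |T_v[0,1) ∩ X_{λ α_v}| = |X_λ|, where X_μ = {T_w(0) : w ∈ W(I), α_w ≥ μ}. -/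
section Aux

variable {I : Type*} (α c : I → ℝ)

lemma wordWeight_nil : wordWeight α [] = 1 := rfl

lemma wordWeight_cons (i : I) (v : List I) :
    wordWeight α (i :: v) = α i * wordWeight α v := by
  simp [wordWeight]

lemma wordWeight_append (v w : List I) :
    wordWeight α (v ++ w) = wordWeight α v * wordWeight α w := by
  simp [wordWeight]

lemma wordMap_nil (x : ℝ) : wordMap α c [] x = x := rfl

lemma wordMap_cons (i : I) (v : List I) (x : ℝ) :
    wordMap α c (i :: v) x = α i * wordMap α c v x + c i := rfl

lemma wordMap_append (v w : List I) (x : ℝ) :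
    wordMap α c (v ++ w) x = wordMap α c v (wordMap α c w x) := by
  simp [wordMap, List.foldr_append]

lemma wordWeight_pos (hpos : ∀ i, 0 < α i) (v : List I) : 0 < wordWeight α v := by
  induction v with
  | nil => norm_num [wordWeight_nil]
  | cons i v ih => rw [wordWeight_cons]; exact mul_pos (hpos i) ih

lemma wordMap_affine (v : List I) (x : ℝ) :
    wordMap α c v x = wordWeight α v * x + wordMap α c v 0 := by
  induction v with
  | nil => simp [wordMap_nil, wordWeight_nil]
  | cons i v ih =>
    rw [wordMap_cons, wordMap_cons, ih, wordWeight_cons]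
    ring

lemma wordMap_mem (hpos : ∀ i, 0 < α i) (hc0 : ∀ i, 0 ≤ c i) (hc1 : ∀ i, α i + c i ≤ 1)
    (v : List I) {x : ℝ} (hx : x ∈ Set.Ico (0:ℝ) 1) :
    wordMap α c v x ∈ Set.Ico (0:ℝ) 1 := by
  induction v with
  | nil => exact hx
  | cons i v ih =>
    rw [wordMap_cons]
    obtain ⟨h0, h1⟩ := ih
    constructor
    · have := hc0 i
      have := (hpos i).le
      nlinarith
    · have := hc1 i
      have := hpos i
      nlinarith

/-- Key structural lemma: if `T_w(0) = T_v(t)` with `t ∈ [0,1)`, then either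
`t = T_u(0)` for some word `u` with `α_w = α_v α_u`, or `t = 0`. -/
lemma key_lemma (hpos : ∀ i, 0 < α i) (hc0 : ∀ i, 0 ≤ c i) (hc1 : ∀ i, α i + c i ≤ 1)
    (hdisj : Pairwise fun i j =>
      Disjoint (Set.Ico (c i) (c i + α i)) (Set.Ico (c j) (c j + α j)))
    (v : List I) : ∀ w : List I, ∀ t ∈ Set.Ico (0:ℝ) 1,
    wordMap α c w 0 = wordMap α c v t →
    (∃ u : List I, wordMap α c u 0 = t ∧
      wordWeight α w = wordWeight α v * wordWeight α u) ∨ t = 0 := by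
  induction v with
  | nil =>
    intro w t ht h
    rw [wordMap_nil] at h
    exact Or.inl ⟨w, h, by rw [wordWeight_nil, one_mul]⟩
  | cons i v ih =>
    intro w t ht h
    have hvt : wordMap α c v t ∈ Set.Ico (0:ℝ) 1 := wordMap_mem α c hpos hc0 hc1 v ht
    cases w with
    | nil =>
      -- 0 = α_{i::v} t + T_{i::v} 0 with all terms nonneg ⇒ t = 0
      rw [wordMap_nil] at h
      right
      rw [wordMap_affine α c (i :: v) t] at h
      have h1 : 0 < wordWeight α (i :: v) := wordWeight_pos α hpos _
      have h2 : wordMap α c (i :: v) 0 ∈ Set.Ico (0:ℝ) 1 :=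
        wordMap_mem α c hpos hc0 hc1 _ (by norm_num)
      nlinarith [ht.1, h2.1]
    | cons j w' =>
      rw [wordMap_cons, wordMap_cons] at h
      have hw' : wordMap α c w' 0 ∈ Set.Ico (0:ℝ) 1 :=
        wordMap_mem α c hpos hc0 hc1 w' (by norm_num)
      have hij : j = i := by
        by_contra hne
        have hmemj : α j * wordMap α c w' 0 + c j ∈ Set.Ico (c j) (c j + α j) := by
          constructor
          · nlinarith [hw'.1, (hpos j).le]
          · nlinarith [hw'.2, hpos j]
        have hmemi : α j * wordMap α c w' 0 + c j ∈ Set.Ico (c i) (c i + α i) := by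
          rw [h]
          constructor
          · nlinarith [hvt.1, (hpos i).le]
          · nlinarith [hvt.2, hpos i]
        exact Set.disjoint_left.mp (hdisj hne) hmemj hmemi
      subst hij
      have heq : wordMap α c w' 0 = wordMap α c v t :=
        mul_left_cancel₀ (hpos j).ne' (by linarith)
      rcases ih w' t ht heq with ⟨u, hu, hwu⟩ | h0
      · exact Or.inl ⟨u, hu, by rw [wordWeight_cons, wordWeight_cons, hwu]; ring⟩
      · exact Or.inr h0

end Aux

/-- For all `v ∈ W(I)` and `λ ∈ (0,1]`:
`|T_v[0,1) ∩ X_{λ α_v}| = |X_λ|`, where `X_μ = {T_w(0) : α_w ≥ μ}`. -/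
theorem card_endpoints_in_cylinder {I : Type*} [Countable I] (α c : I → ℝ)
    (hpos : ∀ i, 0 < α i) (hsum : HasSum α 1)
    (hc0 : ∀ i, 0 ≤ c i) (hc1 : ∀ i, α i + c i ≤ 1)
    (hdisj : Pairwise fun i j =>
      Disjoint (Set.Ico (c i) (c i + α i)) (Set.Ico (c j) (c j + α j)))
    (v : List I) (lam : ℝ) (hlam0 : 0 < lam) (hlam1 : lam ≤ 1) :
    Nat.card ((wordMap α c v '' Set.Ico (0:ℝ) 1) ∩
        {x : ℝ | ∃ w : List I, lam * wordWeight α v ≤ wordWeight α w ∧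
          wordMap α c w 0 = x} : Set ℝ) =
      Nat.card {x : ℝ | ∃ w : List I, lam ≤ wordWeight α w ∧ wordMap α c w 0 = x} := by
  have hvpos : 0 < wordWeight α v := wordWeight_pos α hpos v
  have hinj : Function.Injective (wordMap α c v) := by
    intro a b hab
    rw [wordMap_affine α c v a, wordMap_affine α c v b] at hab
    have := mul_left_cancel₀ hvpos.ne' (by linarith : wordWeight α v * a = wordWeight α v * b)
    exact this
  have hset : ((wordMap α c v '' Set.Ico (0:ℝ) 1) ∩
        {x : ℝ | ∃ w : List I, lam * wordWeight α v ≤ wordWeight α w ∧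
          wordMap α c w 0 = x} : Set ℝ) =
      wordMap α c v '' {x : ℝ | ∃ w : List I, lam ≤ wordWeight α w ∧ wordMap α c w 0 = x} := by
    ext y
    constructor
    · rintro ⟨⟨t, ht, rfl⟩, w, hw1, hw2⟩
      rcases key_lemma α c hpos hc0 hc1 hdisj v w t ht hw2 with ⟨u, hu, hwu⟩ | rfl
      · refine ⟨t, ⟨u, ?_, hu⟩, rfl⟩
        rw [hwu] at hw1
        have h2 : wordWeight α v * lam ≤ wordWeight α v * wordWeight α u := by
          linarith [hw1]
        exact le_of_mul_le_mul_left h2 hvpos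
      · exact ⟨0, ⟨[], by simpa [wordWeight_nil, wordMap_nil] using hlam1⟩, rfl⟩
    · rintro ⟨t, ⟨w, hw1, hw2⟩, rfl⟩
      have htmem : t ∈ Set.Ico (0:ℝ) 1 := by
        rw [← hw2]
        exact wordMap_mem α c hpos hc0 hc1 w (by norm_num)
      refine ⟨⟨t, htmem, rfl⟩, v ++ w, ?_, by rw [wordMap_append, hw2]⟩
      rw [wordWeight_append]
      calc lam * wordWeight α v = wordWeight α v * lam := by ring
        _ ≤ wordWeight α v * wordWeight α w := by
            exact mul_le_mul_of_nonneg_left hw1 hvpos.le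
  rw [hset, Nat.card_coe_set_eq, Nat.card_coe_set_eq,
    Set.ncard_image_of_injective _ hinj]
end

section
/- Let (α_i)_{i∈I} be as above (Σ α_i = 1, Σ α_i^{1−ε} < ∞). If f(1 + iv) = 0 for some real v ≠ 0, then α_i^{iv} = 1 for all i ∈ I, i.e. v log α_i ∈ 2πℤ for every i; consequently the set {−log α_i} generates a discrete (cyclic) subgroup of ℝ, so (α_i) is rank one. -/
/-!
Write `α_i^{1+iv} = α_i · u_i` with `u_i = α_i^{iv}` unimodular. Then `Σ α_i u_i = 1 = Σ α_i`, so
`Σ α_i (1 - Re u_i) = 0` is a vanishing sum of nonnegative terms; hence `Re u_i = 1`, which forces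
`u_i = 1`, i.e. `v log α_i ∈ 2πℤ`. Dividing by `v`, every `-log α_i` is a multiple of `2π / v`.
-/

open Complex

lemma Complex.eq_one_of_one_le_re_of_norm_le_one {z : ℂ} (hre : 1 ≤ z.re) (hnorm : ‖z‖ ≤ 1) :
    z = 1 := by
  have hre_eq : z.re = 1 := le_antisymm ((re_le_norm z).trans hnorm) hre
  have him : z.im = 0 :=
    abs_re_eq_norm.mp (le_antisymm (abs_re_le_norm z) (by rw [hre_eq]; simpa using hnorm))
  exact Complex.ext hre_eq him

/-- Equality case of the triangle inequality for a convex combination of points of the closed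
unit disc. -/
lemma eq_one_of_hasSum_mul_of_norm_le_one {ι : Type*} {w : ι → ℝ} {u : ι → ℂ} {s : ℝ}
    (hw : ∀ i, 0 < w i) (hu : ∀ i, ‖u i‖ ≤ 1) (hws : HasSum w s)
    (hwu : HasSum (fun i => (w i : ℂ) * u i) s) (i : ι) : u i = 1 := by
  have hre : HasSum (fun i => w i * (u i).re) s := by
    simpa only [re_ofReal_mul, ofReal_re] using Complex.hasSum_re hwu
  have hdefect : HasSum (fun i => w i * (1 - (u i).re)) 0 := by
    simpa only [mul_sub, mul_one, sub_self] using hws.sub hre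
  have hnonneg : ∀ i, 0 ≤ w i * (1 - (u i).re) := fun i =>
    mul_nonneg (hw i).le (sub_nonneg.mpr ((re_le_norm _).trans (hu i)))
  have hi : w i * (1 - (u i).re) = 0 := congrFun ((hasSum_zero_iff_of_nonneg hnonneg).mp hdefect) i
  refine Complex.eq_one_of_one_le_re_of_norm_le_one ?_ (hu i)
  linarith [(mul_eq_zero.mp hi).resolve_left (hw i).ne']

lemma Complex.ofReal_cpow_one_add_mul_I {a : ℝ} (ha : 0 < a) (v : ℝ) :
    (a : ℂ) ^ (1 + v * I) = a * (a : ℂ) ^ (v * I) := by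
  rw [cpow_add _ _ (ofReal_ne_zero.mpr ha.ne'), cpow_one]

lemma Complex.norm_ofReal_cpow_mul_I {a : ℝ} (ha : 0 < a) (v : ℝ) : ‖(a : ℂ) ^ (v * I)‖ = 1 := by
  simp [norm_cpow_eq_rpow_re_of_pos ha]

lemma Complex.ofReal_cpow_mul_I_eq_one_iff {a : ℝ} (ha : 0 < a) (v : ℝ) :
    (a : ℂ) ^ (v * I) = 1 ↔ ∃ k : ℤ, v * Real.log a = 2 * Real.pi * k := by
  rw [cpow_def_of_ne_zero (ofReal_ne_zero.mpr ha.ne'), exp_eq_one_iff, ← ofReal_log ha.le]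
  refine exists_congr fun k => ⟨fun h => ?_, fun h => ?_⟩
  · have := congrArg im h
    simp only [mul_im, ofReal_re, ofReal_im, I_re, I_im, mul_re, intCast_re, intCast_im,
      re_ofNat, im_ofNat] at this
    linarith
  · apply Complex.ext <;> simp
    linarith

theorem zero_on_critical_line_implies_rank_one_general {I : Type*}
    (α : I → ℝ) (hpos : ∀ i, 0 < α i) (hsum : HasSum α 1)
    (v : ℝ) (hv : v ≠ 0)
    (hzero : (∑' i : I, (α i : ℂ) ^ ((1 : ℂ) + v * Complex.I)) - 1 = 0) :
    (∀ i : I, ∃ k : ℤ, v * Real.log (α i) = 2 * Real.pi * k) ∧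
      ∃ c : ℝ, ∀ i : I, ∃ k : ℤ, -Real.log (α i) = k * c := by
  set u : I → ℂ := fun i => (α i : ℂ) ^ (v * Complex.I)
  have hsplit : ∀ i, (α i : ℂ) ^ (1 + v * Complex.I) = α i * u i := fun i =>
    ofReal_cpow_one_add_mul_I (hpos i) v
  have hunit : ∀ i, ‖u i‖ ≤ 1 := fun i => (norm_ofReal_cpow_mul_I (hpos i) v).le
  have hsummable : Summable fun i => (α i : ℂ) * u i := by
    refine Summable.of_norm (hsum.summable.congr fun i => ?_)
    rw [norm_mul, norm_ofReal_cpow_mul_I (hpos i), mul_one, norm_real,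
      Real.norm_of_nonneg (hpos i).le]
  have hhasSum : HasSum (fun i => (α i : ℂ) * u i) (1 : ℝ) := by
    simp only [hsplit] at hzero
    simpa [sub_eq_zero.mp hzero] using hsummable.hasSum
  have hperiod : ∀ i, ∃ k : ℤ, v * Real.log (α i) = 2 * Real.pi * k := fun i =>
    (ofReal_cpow_mul_I_eq_one_iff (hpos i) v).mp
      (eq_one_of_hasSum_mul_of_norm_le_one hpos hunit hsum hhasSum i)
  refine ⟨hperiod, 2 * Real.pi / v, fun i => ?_⟩
  obtain ⟨k, hk⟩ := hperiod i
  refine ⟨-k, ?_⟩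
  field_simp
  push_cast
  linarith

/-- If `f(1 + iv) = 0` for some real `v ≠ 0`, where `f(z) = Σ_i α_i^z − 1`, then
`v log α_i ∈ 2πℤ` for every `i`; consequently the set `{−log α_i}` lies in a
cyclic subgroup of `ℝ`, i.e. `(α_i)` is rank one. -/
theorem zero_on_critical_line_implies_rank_one {I : Type*} [Countable I]
    (α : I → ℝ) (hpos : ∀ i, 0 < α i) (hsum : HasSum α 1)
    (v : ℝ) (hv : v ≠ 0)
    (hzero : (∑' i : I, (α i : ℂ) ^ ((1 : ℂ) + v * Complex.I)) - 1 = 0) :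
    (∀ i : I, ∃ k : ℤ, v * Real.log (α i) = 2 * Real.pi * k) ∧
      ∃ c : ℝ, ∀ i : I, ∃ k : ℤ, -Real.log (α i) = k * c :=
  zero_on_critical_line_implies_rank_one_general α hpos hsum v hv hzero
end

section
/- Let α, β ∈ (0,1) with α ≥ β, and suppose γ = log α / log β is (2+r)-badly approximable for some r ≥ 0: there exists d > 0 with |γ − k/l| > d/|l|^{2+r} for all integers k, l with l ≠ 0. Suppose real numbers v, η_α, η_β and nonzero integers k, l satisfy v log α = 2πk + η_α and v log β = 2πl + η_β with |η_α|, |η_β| ≤ π, and suppose |v| ≥ 2π/(−log β). Then π² d ≤ 2π (9|η_α| + |η_β|(3/2 + 2 log α / log β)) |l|^{1+r}. -/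
/-- The key Diophantine inequality from the higher-rank discrepancy argument:
if `γ = log α / log β` is `(2+r)`-badly approximable and
`v log α = 2πk + η_α`, `v log β = 2πl + η_β` with `|η_α|, |η_β| ≤ π`,
`k, l` nonzero integers and `|v| ≥ 2π/(−log β)`, then
`π² d ≤ 2π (9|η_α| + |η_β|(3/2 + 2 log α / log β)) |l|^{1+r}`. -/
theorem badly_approximable_key_inequality
    (α β r d : ℝ) (hα : α ∈ Set.Ioo (0:ℝ) 1) (hβ : β ∈ Set.Ioo (0:ℝ) 1)
    (hba : β ≤ α) (hr : 0 ≤ r) (hd : 0 < d)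
    (hbad : ∀ k l : ℤ, l ≠ 0 →
      d / |(l : ℝ)| ^ ((2:ℝ) + r) < |Real.log α / Real.log β - (k : ℝ) / (l : ℝ)|)
    (v ηa ηb : ℝ) (k l : ℤ) (hk : k ≠ 0) (hl : l ≠ 0)
    (hva : v * Real.log α = 2 * Real.pi * k + ηa)
    (hvb : v * Real.log β = 2 * Real.pi * l + ηb)
    (hηa : |ηa| ≤ Real.pi) (hηb : |ηb| ≤ Real.pi)
    (hv : 2 * Real.pi / (-Real.log β) ≤ |v|) :
    Real.pi ^ 2 * d ≤
      2 * Real.pi * (9 * |ηa| + |ηb| * (3/2 + 2 * Real.log α / Real.log β)) *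
        |(l : ℝ)| ^ ((1:ℝ) + r) := by
  have hpi := Real.pi_pos
  have hLβ : Real.log β < 0 := Real.log_neg hβ.1 hβ.2
  have hLα : Real.log α < 0 := Real.log_neg hα.1 hα.2
  have hLβ0 : Real.log β ≠ 0 := ne_of_lt hLβ
  set γ : ℝ := Real.log α / Real.log β with hγdef
  have hγ0 : 0 ≤ γ := div_nonneg_of_nonpos hLα.le hLβ.le
  -- |v log β| ≥ 2π
  have hvL : 2 * Real.pi ≤ |v * Real.log β| := by
    rw [abs_mul]
    have h1 : 2 * Real.pi / (-Real.log β) * (-Real.log β) ≤ |v| * (-Real.log β) :=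
      mul_le_mul_of_nonneg_right hv (by linarith)
    rw [div_mul_cancel₀ _ (by linarith : -Real.log β ≠ 0)] at h1
    rw [abs_of_neg hLβ]; linarith
  have hvLpos : 0 < |v * Real.log β| := by linarith
  have hvL0 : v * Real.log β ≠ 0 := by
    intro h; rw [h, abs_zero] at hvLpos; linarith
  have hv0 : v ≠ 0 := fun h => hvL0 (by rw [h]; ring)
  have hl0 : (l:ℝ) ≠ 0 := Int.cast_ne_zero.mpr hl
  have hlabs : (1:ℝ) ≤ |(l:ℝ)| := by
    rw [← Int.cast_abs]; exact_mod_cast Int.one_le_abs hl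
  have hlpos : (0:ℝ) < |(l:ℝ)| := by linarith
  -- key identity
  have hid : γ - (k:ℝ)/(l:ℝ) = ((l:ℝ)*ηa - (k:ℝ)*ηb) / ((l:ℝ) * (v * Real.log β)) := by
    rw [hγdef,
      show ((l:ℝ)*ηa - (k:ℝ)*ηb) = v*((l:ℝ)*Real.log α - (k:ℝ)*Real.log β) from by
        linear_combination (k:ℝ)*hvb - (l:ℝ)*hva]
    field_simp
  have hbad' := hbad k l hl
  rw [hid, abs_div, abs_mul] at hbad'
  have hrp : |(l:ℝ)| ^ ((2:ℝ)+r) = |(l:ℝ)| * |(l:ℝ)| ^ ((1:ℝ)+r) := by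
    rw [show (2:ℝ)+r = 1+(1+r) by ring, Real.rpow_add hlpos, Real.rpow_one]
  set X : ℝ := |(l:ℝ)| ^ ((1:ℝ)+r) with hX
  have hXpos : 0 < X := Real.rpow_pos_of_pos hlpos _
  set N : ℝ := |(l:ℝ)*ηa - (k:ℝ)*ηb| with hN
  rw [hrp] at hbad'
  -- from hbad' : d / (|l| * X) < N / (|l| * |vL|), get d * |vL| < N * X
  have h6 : d * |v * Real.log β| < N * X := by
    have h := (div_lt_div_iff₀ (by positivity) (by positivity)).mp hbad'
    nlinarith [hlpos, abs_nonneg ((l:ℝ)*ηa - (k:ℝ)*ηb)]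
  -- bounds on |l| and |k|
  have hlb : |(l:ℝ)| ≤ 3 * |v * Real.log β| / (4 * Real.pi) := by
    have h1 : |2*Real.pi*(l:ℝ)| ≤ |v*Real.log β| + |ηb| := by
      rw [show 2*Real.pi*(l:ℝ) = v*Real.log β - ηb from by linarith [hvb]]
      exact abs_sub _ _
    rw [abs_mul, abs_of_pos (by positivity : (0:ℝ) < 2*Real.pi)] at h1
    rw [le_div_iff₀ (by positivity : (0:ℝ) < 4*Real.pi)]
    nlinarith
  have hvA : |v * Real.log α| = γ * |v * Real.log β| := by
    rw [hγdef, abs_mul, abs_mul, abs_of_neg hLα, abs_of_neg hLβ]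
    field_simp
  have hkb : |(k:ℝ)| ≤ (2*γ+1) * |v * Real.log β| / (4 * Real.pi) := by
    have h1 : |2*Real.pi*(k:ℝ)| ≤ |v*Real.log α| + |ηa| := by
      rw [show 2*Real.pi*(k:ℝ) = v*Real.log α - ηa from by linarith [hva]]
      exact abs_sub _ _
    rw [abs_mul, abs_of_pos (by positivity : (0:ℝ) < 2*Real.pi), hvA] at h1
    rw [le_div_iff₀ (by positivity : (0:ℝ) < 4*Real.pi)]
    nlinarith
  have hNb : N ≤ (3*|ηa| + (2*γ+1)*|ηb|) * |v * Real.log β| / (4*Real.pi) := by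
    calc N ≤ |(l:ℝ)*ηa| + |(k:ℝ)*ηb| := abs_sub _ _
      _ = |(l:ℝ)| * |ηa| + |(k:ℝ)| * |ηb| := by rw [abs_mul, abs_mul]
      _ ≤ (3 * |v * Real.log β| / (4 * Real.pi))*|ηa|
          + ((2*γ+1) * |v * Real.log β| / (4 * Real.pi))*|ηb| := by
            gcongr <;> positivity
      _ = (3*|ηa| + (2*γ+1)*|ηb|) * |v * Real.log β| / (4*Real.pi) := by ring
  have h7 : d < (3*|ηa| + (2*γ+1)*|ηb|) / (4*Real.pi) * X := by
    refine lt_of_mul_lt_mul_right ?_ (abs_nonneg (v*Real.log β))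
    calc d * |v * Real.log β| < N * X := h6
      _ ≤ ((3*|ηa| + (2*γ+1)*|ηb|) * |v * Real.log β| / (4*Real.pi)) * X :=
          mul_le_mul_of_nonneg_right hNb hXpos.le
      _ = (3*|ηa| + (2*γ+1)*|ηb|) / (4*Real.pi) * X * |v * Real.log β| := by ring
  have h2γ : 2 * Real.log α / Real.log β = 2*γ := by rw [hγdef]; ring
  rw [h2γ]
  have h8 := mul_le_mul_of_nonneg_left h7.le (by positivity : (0:ℝ) ≤ Real.pi^2)
  have hπ2 : Real.pi^2 * ((3*|ηa| + (2*γ+1)*|ηb|) / (4*Real.pi) * X)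
      = (Real.pi/4) * (3*|ηa| + (2*γ+1)*|ηb|) * X := by
    field_simp
  rw [hπ2] at h8
  have hco : (Real.pi/4) * (3*|ηa| + (2*γ+1)*|ηb|)
      ≤ 2 * Real.pi * (9 * |ηa| + |ηb| * (3/2 + 2*γ)) := by
    have p1 : 0 ≤ Real.pi * |ηa| := mul_nonneg hpi.le (abs_nonneg ηa)
    have p2 : 0 ≤ Real.pi * |ηb| := mul_nonneg hpi.le (abs_nonneg ηb)
    have p3 : 0 ≤ Real.pi * (γ * |ηb|) :=
      mul_nonneg hpi.le (mul_nonneg hγ0 (abs_nonneg ηb))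
    linarith [p1, p2, p3]
  calc Real.pi ^ 2 * d ≤ (Real.pi/4) * (3*|ηa| + (2*γ+1)*|ηb|) * X := h8
    _ ≤ 2 * Real.pi * (9 * |ηa| + |ηb| * (3/2 + 2*γ)) * X :=
        mul_le_mul_of_nonneg_right hco hXpos.le
end

section
/- Let t ≥ 1, 0 < h < t and z ∈ ℂ with 0 < Re(z) < 1. Define Δ(t,h,z) = ((t+3h)^z − 3(t+2h)^z + 3(t+h)^z − t^z)/h³ · 1/((z+1)(z+2)(z+3)). Then |Δ(t,h,z)| ≤ 4 t^{Re(z)}. -/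
/-!
The numerator is the third forward difference `Δ_[h]^[3]` of `s ↦ s ^ z` at `t`. Since `Δ_[h]`
commutes with differentiation, iterating the mean value inequality bounds it by `h³` times the
supremum of `|z (z - 1) (z - 2) s ^ (z - 3)|` over `[t, t + 3h]`, that is by
`|z (z - 1) (z - 2)| t ^ (Re z - 3) h³`. For `Re z ≥ -1/2` one has `|z - k| ≤ |z + k + 1|`, so
`|z (z - 1) (z - 2)| ≤ |(z + 1) (z + 2) (z + 3)|`, and `t ^ (Re z - 3) ≤ t ^ Re z` as `t ≥ 1`.
-/

open Set Polynomial
open scoped fwdDiff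

theorem norm_fwdDiff_le_of_hasDerivAt {E : Type*} [NormedAddCommGroup E] [NormedSpace ℝ E]
    {f f' : ℝ → E} {a h M : ℝ} (hh : 0 ≤ h)
    (hf : ∀ x ∈ Icc a (a + h), HasDerivAt f (f' x) x) (hM : ∀ x ∈ Icc a (a + h), ‖f' x‖ ≤ M) :
    ‖Δ_[h] f a‖ ≤ M * h := by
  have := norm_image_sub_le_of_norm_deriv_le_segment' (fun x hx => (hf x hx).hasDerivWithinAt)
    (fun x hx => hM x (Ico_subset_Icc_self hx)) (a + h) (right_mem_Icc.2 (by linarith))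
  simpa [fwdDiff] using this

theorem norm_fwdDiff_iter_le_of_hasDerivAt {E : Type*} [NormedAddCommGroup E] [NormedSpace ℝ E]
    {a h : ℝ} (hh : 0 ≤ h) (n : ℕ) {f : ℕ → ℝ → E} {M : ℝ}
    (hf : ∀ k < n, ∀ x ∈ Icc a (a + n * h), HasDerivAt (f k) (f (k + 1) x) x)
    (hM : ∀ x ∈ Icc a (a + n * h), ‖f n x‖ ≤ M) :
    ‖(Δ_[h])^[n] (f 0) a‖ ≤ M * h ^ n := by
  induction n generalizing f M with
  | zero => simpa using hM a (by simp)
  | succ n ih =>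
    have shift_mem : ∀ x ∈ Icc a (a + n * h), ∀ y ∈ Icc x (x + h), y ∈ Icc a (a + ↑(n + 1) * h) :=
      fun x hx y hy => ⟨hx.1.trans hy.1, by push_cast; linarith [hx.2, hy.2]⟩
    rw [Function.iterate_succ_apply, pow_succ, ← mul_assoc, mul_right_comm]
    refine ih (f := fun k => Δ_[h] (f k)) (fun k hk x hx => ?_) (fun x hx => ?_)
    · exact ((hf k (by omega) _ (shift_mem x hx _ ⟨by linarith, le_rfl⟩)).comp_add_const x h).sub
        (hf k (by omega) x (shift_mem x hx _ ⟨le_rfl, by linarith⟩))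
    · exact norm_fwdDiff_le_of_hasDerivAt hh
        (fun y hy => hf n (by omega) y (shift_mem x hx y hy))
        (fun y hy => hM y (shift_mem x hx y hy))

theorem hasDerivAt_ofReal_cpow_const_of_pos {x : ℝ} (hx : 0 < x) (c : ℂ) :
    HasDerivAt (fun y : ℝ => (y : ℂ) ^ c) (c * x ^ (c - 1)) x :=
  (Complex.hasStrictDerivAt_cpow_const (Complex.ofReal_mem_slitPlane.2 hx)).hasDerivAt.comp_ofReal

theorem hasDerivAt_descPochhammer_mul_ofReal_cpow {x : ℝ} (hx : 0 < x) (c : ℂ) (k : ℕ) :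
    HasDerivAt (fun y : ℝ => (descPochhammer ℂ k).eval c * (y : ℂ) ^ (c - k))
      ((descPochhammer ℂ (k + 1)).eval c * (x : ℂ) ^ (c - ↑(k + 1))) x := by
  refine ((hasDerivAt_ofReal_cpow_const_of_pos hx (c - k)).const_mul
    ((descPochhammer ℂ k).eval c)).congr_deriv ?_
  rw [descPochhammer_succ_eval]
  push_cast
  ring_nf

theorem norm_fwdDiff_iter_ofReal_cpow_le {t h : ℝ} (ht : 0 < t) (hh : 0 ≤ h) {c : ℂ} {n : ℕ}
    (hc : c.re ≤ n) :
    ‖(Δ_[h])^[n] (fun s : ℝ => (s : ℂ) ^ c) t‖ ≤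
      ‖(descPochhammer ℂ n).eval c‖ * t ^ (c.re - n) * h ^ n := by
  have := norm_fwdDiff_iter_le_of_hasDerivAt hh n
    (f := fun k (y : ℝ) => (descPochhammer ℂ k).eval c * (y : ℂ) ^ (c - k))
    (M := ‖(descPochhammer ℂ n).eval c‖ * t ^ (c.re - n))
    (fun k _ x hx => hasDerivAt_descPochhammer_mul_ofReal_cpow (ht.trans_le hx.1) c k)
    (fun x hx => ?_)
  · simpa only [descPochhammer_zero, eval_one, CharP.cast_eq_zero, sub_zero, one_mul] using this
  · rw [norm_mul, Complex.norm_cpow_eq_rpow_re_of_pos (ht.trans_le hx.1)]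
    gcongr
    simpa using Real.rpow_le_rpow_of_nonpos ht hx.1 (sub_nonpos.2 hc)

theorem Complex.norm_sub_ofReal_le_norm_add_ofReal_add_one {z : ℂ} {k : ℝ} (hk : -1 / 2 ≤ k)
    (hz : -1 / 2 ≤ z.re) : ‖z - k‖ ≤ ‖z + (k + 1)‖ := by
  rw [← sq_le_sq₀ (norm_nonneg _) (norm_nonneg _), Complex.sq_norm, Complex.sq_norm,
    Complex.normSq_apply, Complex.normSq_apply]
  simp only [sub_re, add_re, sub_im, add_im, ofReal_re, ofReal_im, one_re, one_im, sub_zero,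
    add_zero]
  nlinarith [mul_nonneg (by linarith : (0:ℝ) ≤ 2 * k + 1) (by linarith : (0:ℝ) ≤ 2 * z.re + 1)]

theorem norm_descPochhammer_eval_le_norm_ascPochhammer_eval_add_one {z : ℂ} (hz : -1 / 2 ≤ z.re)
    (n : ℕ) :
    ‖(descPochhammer ℂ n).eval z‖ ≤ ‖(ascPochhammer ℂ n).eval (z + 1)‖ := by
  induction n with
  | zero => simp
  | succ n ih =>
    rw [descPochhammer_succ_eval, ascPochhammer_succ_eval, norm_mul, norm_mul,
      add_right_comm]
    gcongr
    simpa [add_assoc] using Complex.norm_sub_ofReal_le_norm_add_ofReal_add_one (k := n)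
      (by linarith [n.cast_nonneg (α := ℝ)]) hz

theorem finite_difference_bound_general
    (t h : ℝ) (ht : 1 ≤ t) (hh : 0 < h)
    (z : ℂ) (hz0 : 0 < z.re) (hz1 : z.re < 1) :
    ‖(((t + 3*h : ℝ) : ℂ) ^ z - 3 * ((t + 2*h : ℝ) : ℂ) ^ z +
          3 * ((t + h : ℝ) : ℂ) ^ z - ((t : ℝ) : ℂ) ^ z) / (h : ℂ) ^ 3 *
        (1 / ((z + 1) * (z + 2) * (z + 3)))‖ ≤ 4 * t ^ z.re := by
  have hΔ : ((t + 3*h : ℝ) : ℂ) ^ z - 3 * ((t + 2*h : ℝ) : ℂ) ^ z +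
      3 * ((t + h : ℝ) : ℂ) ^ z - ((t : ℝ) : ℂ) ^ z = (Δ_[h])^[3] (fun s : ℝ => (s : ℂ) ^ z) t := by
    simp only [Function.iterate_succ_apply', Function.iterate_zero_apply, fwdDiff]
    push_cast
    ring_nf
  have hP : (ascPochhammer ℂ 3).eval (z + 1) = (z + 1) * (z + 2) * (z + 3) := by
    simp only [ascPochhammer_succ_eval, ascPochhammer_one, eval_X, Nat.cast_one, Nat.cast_ofNat]
    ring
  have hbound : ‖(Δ_[h])^[3] (fun s : ℝ => (s : ℂ) ^ z) t‖ ≤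
      ‖(z + 1) * (z + 2) * (z + 3)‖ * t ^ (z.re - 3) * h ^ 3 := by
    refine (norm_fwdDiff_iter_ofReal_cpow_le (by linarith) hh.le (n := 3)
      (by push_cast; linarith)).trans ?_
    push_cast
    gcongr
    exact hP ▸ norm_descPochhammer_eval_le_norm_ascPochhammer_eval_add_one (by linarith) 3
  rw [hΔ, norm_mul, norm_div, norm_pow, Complex.norm_real, Real.norm_of_nonneg hh.le, norm_div,
    norm_one, ← div_eq_mul_one_div, div_right_comm]
  calc _ ≤ t ^ (z.re - 3) :=
        div_le_of_le_mul₀ (by positivity) (by positivity) <|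
          div_le_of_le_mul₀ (by positivity) (by positivity) (by linarith)
    _ ≤ t ^ z.re := Real.rpow_le_rpow_of_exponent_le ht (by linarith)
    _ ≤ 4 * t ^ z.re := by linarith [Real.rpow_nonneg (by linarith : (0:ℝ) ≤ t) z.re]

/-- The finite-difference estimate for
`Δ(t,h,z) = ((t+3h)^z − 3(t+2h)^z + 3(t+h)^z − t^z)/h³ · 1/((z+1)(z+2)(z+3))`:
for `t ≥ 1`, `0 < h < t` and `0 < Re z < 1`, one has `|Δ(t,h,z)| ≤ 4 t^{Re z}`. -/
theorem finite_difference_bound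
    (t h : ℝ) (ht : 1 ≤ t) (hh : 0 < h) (hht : h < t)
    (z : ℂ) (hz0 : 0 < z.re) (hz1 : z.re < 1) :
    ‖(((t + 3*h : ℝ) : ℂ) ^ z - 3 * ((t + 2*h : ℝ) : ℂ) ^ z +
          3 * ((t + h : ℝ) : ℂ) ^ z - ((t : ℝ) : ℂ) ^ z) / (h : ℂ) ^ 3 *
        (1 / ((z + 1) * (z + 2) * (z + 3)))‖ ≤ 4 * t ^ z.re :=
  finite_difference_bound_general t h ht hh z hz0 hz1
end
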